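/- arXiv:math/0311142 — 4 statements merged into one kernel-verified Lean document; each statement's English description precedes it below -/
import Mathlib

section
/- Let x : ℝ → ℝ^(N+1) be continuously differentiable solving x'(t) = B(t) x(t), where B(t) has nonnegative off-diagonal entries and the map t ↦ B(t) is continuous. If x(s) ≥ 0 componentwise, then for all t ≥ s, ‖x(t)‖₁ ≥ exp(∫_s^t min_j Σ_i b_ij(τ) dτ) · ‖x(s)‖₁. -/
open Real Matrix Set

/-! Both halves rest on the integrating-factor bound `f' ≥ m f ⟹ f b ≥ exp (∫ₐᵇ m) · f a`.
Nonnegativity is preserved: the perturbed solution `y = x + ε e^{K(t-s)} 1`, with `K` bounding the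
row sums of `B`, satisfies `yᵢ' ≥ bᵢᵢ yᵢ` while all its components are positive, so by that bound
no component can be the first to vanish; then let `ε → 0`. For `x ≥ 0` the total mass `S = ∑ xᵢ`
satisfies `S' = ∑ⱼ (∑ᵢ bᵢⱼ) xⱼ ≥ (minⱼ ∑ᵢ bᵢⱼ) S`, which the same bound integrates. -/

theorem exp_integral_mul_le_of_hasDerivAt {f f' m : ℝ → ℝ} {a b : ℝ} (hab : a ≤ b)
    (hm : Continuous m) (hf : ∀ u ∈ Icc a b, HasDerivAt f (f' u) u)
    (hle : ∀ u ∈ Ioo a b, m u * f u ≤ f' u) :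
    exp (∫ u in a..b, m u) * f a ≤ f b := by
  set I : ℝ → ℝ := fun v => ∫ u in a..v, m u
  have hI : ∀ v, HasDerivAt I (m v) v := fun v => hm.integral_hasStrictDerivAt a v |>.hasDerivAt
  have hg : ∀ u ∈ Icc a b, HasDerivAt (fun v => f v * exp (-I v))
      ((f' u - m u * f u) * exp (-I u)) u :=
    fun u hu => ((hf u hu).mul (hI u).fun_neg.exp).congr_deriv (by ring)
  have hmono : MonotoneOn (fun v => f v * exp (-I v)) (Icc a b) := by
    refine monotoneOn_of_hasDerivWithinAt_nonneg (f' := fun u => (f' u - m u * f u) * exp (-I u))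
      (convex_Icc a b)
      (fun u hu => (hg u hu).continuousAt.continuousWithinAt) (fun u hu => ?_) (fun u hu => ?_)
    · rw [interior_Icc] at hu ⊢
      exact (hg u (Ioo_subset_Icc_self hu)).hasDerivWithinAt
    · rw [interior_Icc] at hu
      have := sub_nonneg.2 (hle u hu)
      positivity
  have hend := hmono (left_mem_Icc.2 hab) (right_mem_Icc.2 hab) hab
  simp only [I, intervalIntegral.integral_same, neg_zero, exp_zero, mul_one] at hend
  calc exp (I b) * f a ≤ exp (I b) * (f b * exp (-I b)) := by gcongr
    _ = f b := by rw [mul_left_comm, ← exp_add, add_neg_cancel, exp_zero, mul_one]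

theorem pos_of_mul_le_deriv {ι : Type*} [Fintype ι] {y y' : ℝ → ι → ℝ} {d : ι → ℝ → ℝ} {s T : ℝ}
    (hd : ∀ i, Continuous (d i)) (hy : ∀ u, HasDerivAt y (y' u) u) (hys : ∀ i, 0 < y s i)
    (hle : ∀ u ∈ Icc s T, (∀ j, 0 < y u j) → ∀ i, d i u * y u i ≤ y' u i) :
    ∀ t ∈ Icc s T, ∀ i, 0 < y t i := by
  by_contra! hbad
  have hyc : Continuous y := continuous_iff_continuousAt.2 fun u => (hy u).continuousAt
  have hcpt : IsCompact (Icc s T ∩ ⋃ i, {t | y t i ≤ 0}) :=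
    isCompact_Icc.inter_right <| isClosed_iUnion_of_finite fun i =>
      isClosed_le ((continuous_apply i).comp hyc) continuous_const
  obtain ⟨t, ht, j, hj⟩ := hbad
  obtain ⟨c, ⟨hc, hci⟩, hfirst⟩ := hcpt.exists_isLeast ⟨t, ht, mem_iUnion.2 ⟨j, hj⟩⟩
  obtain ⟨i, hi⟩ := mem_iUnion.1 hci
  have hbefore : ∀ u ∈ Ico s c, ∀ j, 0 < y u j := fun u hu j => by
    by_contra! hj
    exact hu.2.not_ge (hfirst ⟨⟨hu.1, hu.2.le.trans hc.2⟩, mem_iUnion.2 ⟨j, hj⟩⟩)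
  have hgrowth := exp_integral_mul_le_of_hasDerivAt hc.1 (hd i)
    (fun u _ => hasDerivAt_pi.1 (hy u) i)
    fun u hu => hle u ⟨hu.1.le, hu.2.le.trans hc.2⟩ (hbefore u (Ioo_subset_Ico_self hu)) i
  exact ((mul_pos (exp_pos _) (hys i)).trans_le hgrowth).not_ge hi

def Matrix.IsMetzler {ι R : Type*} [Zero R] [LE R] (A : Matrix ι ι R) : Prop :=
  ∀ i j, i ≠ j → 0 ≤ A i j

theorem Matrix.IsMetzler.diag_mul_le_mulVec {ι R : Type*} [Fintype ι] [Semiring R] [PartialOrder R]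
    [IsOrderedRing R] {A : Matrix ι ι R} (hA : A.IsMetzler) {v : ι → R} (hv : 0 ≤ v) (i : ι) :
    A i i * v i ≤ (A *ᵥ v) i := by
  classical
  rw [mulVec, dotProduct, ← Finset.add_sum_erase _ _ (Finset.mem_univ i)]
  exact le_add_of_nonneg_right <| Finset.sum_nonneg fun j hj =>
    mul_nonneg (hA i j (Finset.ne_of_mem_erase hj).symm) (hv j)

theorem nonneg_of_hasDerivAt_isMetzler_mulVec {ι : Type*} [Fintype ι] {B : ℝ → Matrix ι ι ℝ}
    (hB : Continuous B) (hM : ∀ t, (B t).IsMetzler) {x : ℝ → ι → ℝ}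
    (hx : ∀ t, HasDerivAt x (B t *ᵥ x t) t) {s t : ℝ} (hst : s ≤ t) (hxs : 0 ≤ x s) :
    0 ≤ x t := by
  obtain ⟨K, hK⟩ := isCompact_Icc.exists_bound_of_continuousOn (s := Icc s t)
    (hB.matrix_mulVec (continuous_const (y := (1 : ι → ℝ)))).continuousOn
  have hrow : ∀ u ∈ Icc s t, ∀ i, (B u *ᵥ 1) i ≤ K := fun u hu i =>
    (le_abs_self _).trans ((norm_le_pi_norm (B u *ᵥ 1) i).trans (hK u hu))
  have hpert : ∀ ε > 0, ∀ i, 0 < x t i + ε * exp (K * (t - s)) := by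
    intro ε hε i
    set e : ℝ → ℝ := fun u => ε * exp (K * (u - s))
    have he : ∀ u, HasDerivAt e (e u * K) u := fun u =>
      ((((hasDerivAt_id u).sub_const s).const_mul K).exp.const_mul ε).congr_deriv (by simp only [e, id, mul_one]; ring)
    suffices 0 < (x t + e t • 1) i by simpa [e] using this
    refine pos_of_mul_le_deriv (y := fun u => x u + e u • 1)
      (y' := fun u => B u *ᵥ x u + (e u * K) • 1) (d := fun j u => B u j j)
      (fun j => hB.matrix_elem j j) (fun u => (hx u).add ((he u).smul_const 1))
      (fun j => ?_) (fun u hu hpos j => ?_) t ⟨hst, le_rfl⟩ i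
    · simpa [e] using add_pos_of_nonneg_of_pos (hxs j) hε
    · calc B u j j * (x u + e u • 1) j ≤ (B u *ᵥ (x u + e u • 1)) j :=
            (hM u).diag_mul_le_mulVec (fun k => (hpos k).le) j
        _ = (B u *ᵥ x u) j + e u * (B u *ᵥ 1) j := by simp [mulVec_add, mulVec_smul]
        _ ≤ (B u *ᵥ x u) j + e u * K := by gcongr; exact hrow u hu j
        _ = (B u *ᵥ x u + (e u * K) • 1) j := by simp
  intro i
  refine le_of_forall_pos_lt_add fun δ hδ => ?_
  simpa [div_mul_cancel₀] using hpert (δ / exp (K * (t - s))) (by positivity) i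

theorem Continuous.ciInf_apply {X L ι : Type*} [TopologicalSpace X] [ConditionallyCompleteLattice L]
    [TopologicalSpace L] [ContinuousInf L] [Fintype ι] [Nonempty ι] {f : ι → X → L}
    (hf : ∀ i, Continuous (f i)) : Continuous fun a => ⨅ i, f i a := by
  simp_rw [← Finset.inf'_univ_eq_ciInf]
  exact Continuous.finset_inf'_apply _ fun i _ => hf i

theorem iInf_sum_mul_sum_le_sum_mulVec {m n : Type*} [Fintype m] [Fintype n] (A : Matrix m n ℝ)
    {v : n → ℝ} (hv : 0 ≤ v) : (⨅ j, ∑ i, A i j) * ∑ j, v j ≤ ∑ i, (A *ᵥ v) i :=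
  calc (⨅ j, ∑ i, A i j) * ∑ j, v j = ∑ j, (⨅ k, ∑ i, A i k) * v j := Finset.mul_sum _ _ _
    _ ≤ ∑ j, (∑ i, A i j) * v j := Finset.sum_le_sum fun j _ =>
      mul_le_mul_of_nonneg_right (ciInf_le (finite_range _).bddBelow j) (hv j)
    _ = ∑ i, (A *ᵥ v) i := by
      simp only [mulVec, dotProduct, Finset.sum_mul]
      exact Finset.sum_comm

/-- Lower bound for solutions of x' = B(t)x with nonnegative off-diagonal B(t)
    and nonnegative initial value: ‖x(t)‖₁ ≥ exp(∫_s^t min_j ∑_i b_ij(τ) dτ)·‖x(s)‖₁. -/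
theorem l1_lower_bound_nonneg_offdiag {N : ℕ}
    (B : ℝ → Matrix (Fin (N+1)) (Fin (N+1)) ℝ)
    (hBcont : Continuous B)
    (hoffdiag : ∀ t, ∀ i j, i ≠ j → 0 ≤ B t i j)
    (x : ℝ → Fin (N+1) → ℝ)
    (hx : ∀ t, HasDerivAt x (B t *ᵥ x t) t)
    (s : ℝ) (hxs : ∀ i, 0 ≤ x s i) :
    ∀ t, s ≤ t →
      Real.exp (∫ τ in s..t, ⨅ j, ∑ i, B τ i j) * (∑ i, |x s i|)
        ≤ ∑ i, |x t i| := by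
  intro t hst
  have hpos : ∀ u, s ≤ u → 0 ≤ x u := fun u hsu =>
    nonneg_of_hasDerivAt_isMetzler_mulVec hBcont hoffdiag hx hsu hxs
  have hm : Continuous fun τ => ⨅ j, ∑ i, B τ i j :=
    Continuous.ciInf_apply fun j => continuous_finsetSum _ fun i _ => hBcont.matrix_elem i j
  have hgrowth := exp_integral_mul_le_of_hasDerivAt (f := fun u => ∑ i, x u i) hst hm
    (fun u _ => HasDerivAt.fun_sum fun i _ => hasDerivAt_pi.1 (hx u) i)
    fun u hu => iInf_sum_mul_sum_le_sum_mulVec (B u) (hpos u hu.1.le)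
  simpa only [abs_of_nonneg (hxs _), abs_of_nonneg (hpos t hst _)] using hgrowth
end

section
/- Let x : ℝ → ℝ^(N+1) solve x'(t) = B(t)x(t) with B continuous. Then for t ≥ s, ‖x(t)‖₁ ≤ exp(∫_s^t γ(B(τ)) dτ) · ‖x(s)‖₁, where γ(B) = max_j (b_jj + Σ_{i≠j}|b_ij|) is the l^1 logarithmic norm. -/
/-!
Each `|xᵢ|` has a right derivative at every time, and splitting `(B x)ᵢ` into its diagonal and
off-diagonal parts and summing over `i` column by column bounds the right derivative of `‖x‖₁` by
`γ(B t) ‖x t‖₁`. Hence `exp (-∫ₛᵗ γ) ‖x t‖₁` has nonpositive right derivative, and the fencing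
theorem (a one-sided mean value theorem) shows it does not increase.
-/

open Real Filter Matrix Set Topology

/-- The right derivative at `t` of `|g|` when `g t = a` and `g' t = d`. -/
noncomputable def absRightDeriv (a d : ℝ) : ℝ :=
  if a = 0 then |d| else SignType.sign a * d

theorem HasDerivAt.hasDerivWithinAt_abs_Ioi {g : ℝ → ℝ} {d t : ℝ} (hg : HasDerivAt g d t) :
    HasDerivWithinAt (fun τ => |g τ|) (absRightDeriv (g t) d) (Ioi t) t := by
  unfold absRightDeriv
  split_ifs with h0
  · rw [hasDerivWithinAt_iff_tendsto_slope' self_notMem_Ioi]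
    have hslope : Tendsto (slope g t) (𝓝[>] t) (𝓝 d) :=
      (hasDerivAt_iff_tendsto_slope.1 hg).mono_left (nhdsWithin_mono t fun z hz => ne_of_gt hz)
    refine hslope.abs.congr' (eventually_nhdsWithin_of_forall fun z (hz : t < z) => ?_)
    rw [slope_def_field, slope_def_field, h0, abs_zero, sub_zero, sub_zero, abs_div,
      abs_of_pos (sub_pos.2 hz)]
  · exact ((hasDerivAt_abs h0).comp t hg).hasDerivWithinAt

theorem absRightDeriv_mul_add_le (a c e : ℝ) : absRightDeriv a (c * a + e) ≤ c * |a| + |e| := by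
  unfold absRightDeriv
  split_ifs with h0
  · simp [h0]
  · calc (SignType.sign a : ℝ) * (c * a + e) = c * |a| + SignType.sign a * e := by
          rw [mul_add, mul_left_comm, sign_mul_self]
      _ ≤ c * |a| + |e| := by
          gcongr
          rcases lt_or_gt_of_ne h0 with h | h <;> simp [h, neg_le_abs, le_abs_self]

theorem HasDerivAt.hasDerivWithinAt_sum_abs_Ioi {ι : Type*} [Fintype ι] {f : ℝ → ι → ℝ}
    {f' : ι → ℝ} {t : ℝ} (hf : HasDerivAt f f' t) :
    HasDerivWithinAt (fun τ => ∑ i, |f τ i|) (∑ i, absRightDeriv (f t i) (f' i)) (Ioi t) t :=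
  HasDerivWithinAt.fun_sum fun i _ => (hasDerivAt_pi.1 hf i).hasDerivWithinAt_abs_Ioi

theorem le_exp_integral_mul_of_hasDerivWithinAt_Ioi {f f' g : ℝ → ℝ} {s t : ℝ} (hst : s ≤ t)
    (hf : ContinuousOn f (Icc s t)) (hg : Continuous g)
    (hf' : ∀ τ ∈ Ico s t, HasDerivWithinAt f (f' τ) (Ioi τ) τ)
    (hbound : ∀ τ ∈ Ico s t, f' τ ≤ g τ * f τ) :
    f t ≤ exp (∫ τ in s..t, g τ) * f s := by
  set I := fun τ => ∫ u in s..τ, g u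
  have hI : ∀ τ, HasDerivAt (fun τ => exp (-I τ)) (exp (-I τ) * -g τ) τ := fun τ =>
    (hg.integral_hasStrictDerivAt s τ).hasDerivAt.neg.exp
  have hdamped : exp (-I t) * f t ≤ f s :=
    image_le_of_deriv_right_le_deriv_boundary (f := fun τ => exp (-I τ) * f τ)
      (f' := fun τ => exp (-I τ) * (f' τ - g τ * f τ)) (B := fun _ => f s) (B' := 0)
      ((continuous_iff_continuousAt.2 fun τ => (hI τ).continuousAt).continuousOn.mul hf)
      (fun τ hτ => ((hI τ).hasDerivWithinAt.mul
        (hasDerivWithinAt_Ioi_iff_Ici.1 (hf' τ hτ))).congr_deriv (by ring))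
      (by simp [I]) continuousOn_const (fun τ _ => hasDerivWithinAt_const _ _ _)
      (fun τ hτ => mul_nonpos_of_nonneg_of_nonpos (exp_pos _).le (sub_nonpos.2 (hbound τ hτ)))
      (right_mem_Icc.2 hst)
  calc f t = exp (I t) * (exp (-I t) * f t) := by
        rw [← mul_assoc, ← exp_add, add_neg_cancel, exp_zero, one_mul]
    _ ≤ exp (I t) * f s := by gcongr

namespace Matrix

variable {n : Type*} [Fintype n] [DecidableEq n]

/-- The `ℓ¹` logarithmic norm `γ(M)`. -/
noncomputable def l1LogNorm (M : Matrix n n ℝ) : ℝ :=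
  ⨆ j, (M j j + ∑ i ∈ Finset.univ.erase j, |M i j|)

theorem le_l1LogNorm (M : Matrix n n ℝ) (j : n) :
    M j j + ∑ i ∈ Finset.univ.erase j, |M i j| ≤ M.l1LogNorm :=
  le_ciSup (f := fun j => M j j + ∑ i ∈ Finset.univ.erase j, |M i j|) (Finite.bddAbove_range _) j

theorem sum_absRightDeriv_mulVec_le (M : Matrix n n ℝ) (v : n → ℝ) :
    ∑ i, absRightDeriv (v i) ((M *ᵥ v) i) ≤ M.l1LogNorm * ∑ i, |v i| := by
  have hrow : ∀ i, (M *ᵥ v) i = M i i * v i + ∑ j ∈ Finset.univ.erase i, M i j * v j := fun i => by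
    simp only [mulVec, dotProduct]
    rw [← Finset.add_sum_erase _ _ (Finset.mem_univ i)]
  calc ∑ i, absRightDeriv (v i) ((M *ᵥ v) i)
      ≤ ∑ i, (M i i * |v i| + ∑ j ∈ Finset.univ.erase i, |M i j| * |v j|) := by
        gcongr with i
        rw [hrow]
        refine (absRightDeriv_mul_add_le _ _ _).trans ?_
        gcongr
        exact (Finset.abs_sum_le_sum_abs _ _).trans_eq (by simp_rw [abs_mul])
    _ = ∑ j, (M j j + ∑ i ∈ Finset.univ.erase j, |M i j|) * |v j| := by
        rw [Finset.sum_add_distrib, Finset.sum_comm' (t' := Finset.univ)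
          (s' := fun j => Finset.univ.erase j) (by simp [ne_comm])]
        simp_rw [add_mul, Finset.sum_mul, Finset.sum_add_distrib]
    _ ≤ ∑ j, M.l1LogNorm * |v j| := by gcongr with j; exact le_l1LogNorm M j
    _ = M.l1LogNorm * ∑ j, |v j| := (Finset.mul_sum _ _ _).symm

theorem _root_.Continuous.matrix_l1LogNorm {X : Type*} [TopologicalSpace X] [Nonempty n]
    {B : X → Matrix n n ℝ} (hB : Continuous B) : Continuous fun x => (B x).l1LogNorm := by
  simp_rw [l1LogNorm, ← Finset.sup'_univ_eq_ciSup]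
  exact Continuous.finset_sup'_apply Finset.univ_nonempty fun j _ =>
    (hB.matrix_elem j j).add (continuous_finsetSum _ fun i _ => (hB.matrix_elem i j).abs)

end Matrix

/-- Upper bound via the l¹ logarithmic norm:
    ‖x(t)‖₁ ≤ exp(∫_s^t γ(B(τ)) dτ)·‖x(s)‖₁ where
    γ(B) = max_j (b_jj + ∑_{i≠j} |b_ij|). -/
theorem l1_upper_bound_log_norm {N : ℕ}
    (B : ℝ → Matrix (Fin (N+1)) (Fin (N+1)) ℝ)
    (hBcont : Continuous B)
    (x : ℝ → Fin (N+1) → ℝ)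
    (hx : ∀ t, HasDerivAt x (B t *ᵥ x t) t)
    (s : ℝ) :
    ∀ t, s ≤ t →
      ∑ i, |x t i| ≤
        Real.exp (∫ τ in s..t,
            ⨆ j, (B τ j j + ∑ i ∈ Finset.univ.erase j, |B τ i j|)) *
          (∑ i, |x s i|) := by
  intro t hst
  have hxc : Continuous x := continuous_iff_continuousAt.2 fun τ => (hx τ).continuousAt
  exact le_exp_integral_mul_of_hasDerivWithinAt_Ioi hst
    (continuous_finsetSum _ fun i _ => ((continuous_apply i).comp hxc).abs).continuousOn
    hBcont.matrix_l1LogNorm (fun τ _ => (hx τ).hasDerivWithinAt_sum_abs_Ioi)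
    (fun τ _ => (B τ).sum_absRightDeriv_mulVec_le (x τ))
end

section
/- Let D be the N×N upper triangular matrix with D_ij = d_i for i ≤ j and 0 otherwise, with d_0,…,d_{N-1} > 0, and g = min_k d_k. Then for every z ∈ ℝ^N, ‖Dz‖₁ ≥ (g/2)‖z‖₁. -/
open Matrix

/-- For the upper triangular matrix D with D_ij = d_i for i ≤ j, d_k > 0,
    and g = min_k d_k, one has ‖Dz‖₁ ≥ (g/2)‖z‖₁ for every z. -/
theorem triangular_D_lower_bound {N : ℕ} (hN : 1 ≤ N) (d : Fin N → ℝ)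
    (hd : ∀ k, 0 < d k)
    (D : Matrix (Fin N) (Fin N) ℝ)
    (hD : ∀ i j, D i j = if i ≤ j then d i else 0)
    (g : ℝ) (hg : g = ⨅ k, d k)
    (z : Fin N → ℝ) :
    g / 2 * (∑ i, |z i|) ≤ ∑ i, |(D *ᵥ z) i| := by
  have hNe : Nonempty (Fin N) := ⟨⟨0, hN⟩⟩
  set S : ℕ → ℝ := fun k => ∑ j : Fin N, if k ≤ j.val then z j else 0 with hS
  have hSN : S N = 0 := by
    apply Finset.sum_eq_zero
    intro j _
    rw [if_neg (by omega)]
  have hMv : ∀ i : Fin N, (D *ᵥ z) i = d i * S i.val := by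
    intro i
    simp only [mulVec, dotProduct, hD, hS, Finset.mul_sum]
    apply Finset.sum_congr rfl
    intro j _
    by_cases h : i ≤ j
    · rw [if_pos h, if_pos (Fin.le_def.mp h)]
    · rw [if_neg h, if_neg (fun hh => h (Fin.le_def.mpr hh)), zero_mul, mul_zero]
  have hz : ∀ i : Fin N, z i = S i.val - S (i.val + 1) := by
    intro i
    simp only [hS, ← Finset.sum_sub_distrib]
    rw [Finset.sum_eq_single i]
    · simp
    · intro j _ hj
      have hne : i.val ≠ j.val := fun h => hj (Fin.ext h.symm)
      by_cases h : i.val ≤ j.val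
      · rw [if_pos h, if_pos (by omega), sub_self]
      · rw [if_neg h, if_neg (by omega), sub_self]
    · intro h; exact absurd (Finset.mem_univ i) h
  have hg0 : 0 ≤ g := by
    rw [hg]
    exact le_ciInf fun k => (hd k).le
  have hgle : ∀ k, g ≤ d k := by
    intro k
    rw [hg]
    exact ciInf_le (Set.Finite.bddBelow (Set.finite_range d)) k
  set T : ℝ := ∑ i : Fin N, |S i.val| with hT
  have h1 : ∑ i : Fin N, |z i| ≤ 2 * T := by
    have step : ∑ i : Fin N, |z i| ≤ T + ∑ i : Fin N, |S (i.val + 1)| := by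
      rw [hT, ← Finset.sum_add_distrib]
      apply Finset.sum_le_sum
      intro i _
      rw [hz i]
      exact abs_sub _ _
    have shift : ∑ i : Fin N, |S (i.val + 1)| ≤ T := by
      rw [hT, Fin.sum_univ_eq_sum_range (fun k => |S (k + 1)|),
        Fin.sum_univ_eq_sum_range (fun k => |S k|)]
      have e1 : ∑ k ∈ Finset.range (N + 1), |S k|
          = (∑ k ∈ Finset.range N, |S (k + 1)|) + |S 0| :=
        Finset.sum_range_succ' _ _
      have e2 : ∑ k ∈ Finset.range (N + 1), |S k|
          = (∑ k ∈ Finset.range N, |S k|) + |S N| :=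
        Finset.sum_range_succ _ _
      rw [hSN, abs_zero, add_zero] at e2
      have := abs_nonneg (S 0)
      linarith
    linarith
  have h2 : g * T ≤ ∑ i, |(D *ᵥ z) i| := by
    rw [hT, Finset.mul_sum]
    apply Finset.sum_le_sum
    intro i _
    rw [hMv i, abs_mul, abs_of_pos (hd i)]
    exact mul_le_mul_of_nonneg_right (hgle i) (abs_nonneg _)
  nlinarith [h1, h2, hg0, mul_le_mul_of_nonneg_left h1 (by linarith : (0:ℝ) ≤ g / 2)]
end

section
/- With D as above (D_ij = d_i for i ≤ j, else 0, d_k > 0) and G = max_k d_k, g = min_k d_k, the l^1 operator norms satisfy ‖D‖ ≤ N·G and ‖D⁻¹‖ ≤ 2/g. -/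
/-- For the triangular matrix D (D_ij = d_i for i ≤ j, else 0, d_k > 0),
    with G = max_k d_k and g = min_k d_k, the l¹-induced operator norms satisfy
    ‖D‖ ≤ N·G and ‖D⁻¹‖ ≤ 2/g. -/
theorem triangular_D_opNorm_bounds {N : ℕ} (hN : 1 ≤ N) (d : Fin N → ℝ)
    (hd : ∀ k, 0 < d k)
    (D : Matrix (Fin N) (Fin N) ℝ)
    (hD : ∀ i j, D i j = if i ≤ j then d i else 0)
    (G g : ℝ) (hG : G = ⨆ k, d k) (hg : g = ⨅ k, d k) :
    (⨆ j, ∑ i, |D i j|) ≤ N * G ∧ (⨆ j, ∑ i, |D⁻¹ i j|) ≤ 2 / g := by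
  have hne : Nonempty (Fin N) := ⟨⟨0, hN⟩⟩
  have hdG : ∀ k, d k ≤ G := fun k =>
    hG ▸ le_ciSup (Set.Finite.bddAbove (Set.finite_range d)) k
  have hgd : ∀ k, g ≤ d k := fun k =>
    hg ▸ ciInf_le (Set.Finite.bddBelow (Set.finite_range d)) k
  have hGpos : 0 < G := lt_of_lt_of_le (hd ⟨0, hN⟩) (hdG _)
  have hgpos : 0 < g := by
    obtain ⟨k0, hk0⟩ := Finite.exists_min d
    exact lt_of_lt_of_le (hd k0) (hg ▸ le_ciInf hk0)
  constructor
  · apply ciSup_le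
    intro j
    calc ∑ i, |D i j| ≤ ∑ _i : Fin N, G := by
          apply Finset.sum_le_sum
          intro i _
          rw [hD]
          split
          · rw [abs_of_pos (hd i)]; exact hdG i
          · simpa using hGpos.le
      _ = N * G := by simp [mul_comm]
  · -- explicit inverse
    set E : Matrix (Fin N) (Fin N) ℝ := fun i j =>
      if i = j then 1 / d i else if (i : ℕ) + 1 = (j : ℕ) then -(1 / d j) else 0 with hE
    have hEsplit : ∀ i j : Fin N, E i j =
        (if i = j then 1 / d j else 0) +
        (if (i : ℕ) + 1 = (j : ℕ) then -(1 / d j) else 0) := by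
      intro i j
      by_cases h1 : i = j
      · subst h1
        simp [hE, show ¬((i : ℕ) + 1 = (i : ℕ)) by omega]
      · simp [hE, h1]
    have hDE : D * E = 1 := by
      ext i k
      rw [Matrix.mul_apply]
      have : ∀ j, D i j * E j k =
          (if j = k then D i j * (1 / d k) else 0) +
          (if (j : ℕ) + 1 = (k : ℕ) then D i j * (-(1 / d k)) else 0) := by
        intro j
        rw [hEsplit j k, mul_add]
        congr 1 <;> split <;> simp
      rw [Finset.sum_congr rfl (fun j _ => this j), Finset.sum_add_distrib]
      have hS1 : (∑ j, if j = k then D i j * (1 / d k) else 0) = D i k * (1 / d k) := by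
        rw [Finset.sum_ite_eq' Finset.univ k]
        simp
      rw [hS1]
      by_cases hk : (k : ℕ) = 0
      · have hS2 : (∑ j : Fin N, if (j : ℕ) + 1 = (k : ℕ)
            then D i j * (-(1 / d k)) else 0) = 0 := by
          apply Finset.sum_eq_zero
          intro j _
          rw [if_neg (by omega)]
        rw [hS2, add_zero, hD, Matrix.one_apply]
        have h1 : (i ≤ k) ↔ (i : ℕ) ≤ (k : ℕ) := Fin.le_def
        have h2 : (i = k) ↔ (i : ℕ) = (k : ℕ) := Fin.ext_iff
        by_cases hik : (i : ℕ) = (k : ℕ)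
        · rw [if_pos (h1.mpr (by omega)), if_pos (h2.mpr hik),
            show d i = d k by rw [show i = k from h2.mpr hik]]
          rw [one_div, mul_inv_cancel₀ (hd k).ne']
        · rw [if_neg (fun h => hik (by have := h1.mp h; omega)),
            if_neg (fun h => hik (h2.mp h))]
          ring
      · set j0 : Fin N := ⟨(k : ℕ) - 1, by omega⟩ with hj0
        have hj0v : (j0 : ℕ) = (k : ℕ) - 1 := rfl
        have hS2 : (∑ j : Fin N, if (j : ℕ) + 1 = (k : ℕ)
            then D i j * (-(1 / d k)) else 0) = D i j0 * (-(1 / d k)) := by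
          rw [Finset.sum_eq_single_of_mem j0 (Finset.mem_univ _)]
          · rw [if_pos (by omega)]
          · intro j _ hj
            rw [if_neg]
            intro h
            exact hj (Fin.val_injective (show (j : ℕ) = (j0 : ℕ) by omega))
        rw [hS2, hD, hD, Matrix.one_apply]
        have h1 : (i ≤ k) ↔ (i : ℕ) ≤ (k : ℕ) := Fin.le_def
        have h2 : (i = k) ↔ (i : ℕ) = (k : ℕ) := Fin.ext_iff
        have h3 : (i ≤ j0) ↔ (i : ℕ) ≤ (k : ℕ) - 1 := Fin.le_def
        rcases lt_trichotomy (i : ℕ) (k : ℕ) with h | h | h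
        · rw [if_pos (h1.mpr h.le), if_pos (h3.mpr (by omega)),
            if_neg (fun hh => by have := h2.mp hh; omega)]
          ring
        · rw [if_pos (h1.mpr h.le), if_neg (fun hh => by have := h3.mp hh; omega),
            if_pos (h2.mpr h), show d i = d k by rw [show i = k from h2.mpr h]]
          rw [zero_mul, add_zero, one_div, mul_inv_cancel₀ (hd k).ne']
        · rw [if_neg (fun hh => by have := h1.mp hh; omega),
            if_neg (fun hh => by have := h3.mp hh; omega),
            if_neg (fun hh => by have := h2.mp hh; omega)]
          ring
    have hinv : D⁻¹ = E := Matrix.inv_eq_right_inv hDE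
    rw [hinv]
    apply ciSup_le
    intro j
    have habs : ∀ i : Fin N, |E i j| =
        (if i = j then 1 / d j else 0) +
        (if (i : ℕ) + 1 = (j : ℕ) then 1 / d j else 0) := by
      intro i
      rw [hEsplit i j]
      by_cases h1 : i = j
      · subst h1
        simp [show ¬((i:ℕ)+1 = (i:ℕ)) from by omega, abs_of_pos (one_div_pos.mpr (hd i))]
        exact (hd i).le
      · rw [if_neg h1, zero_add, zero_add]
        split
        · rw [abs_neg, abs_of_pos (one_div_pos.mpr (hd j))]
        · simp
    calc ∑ i, |E i j|
        = (∑ i : Fin N, if i = j then 1 / d j else 0) +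
          (∑ i : Fin N, if (i : ℕ) + 1 = (j : ℕ) then 1 / d j else 0) := by
          rw [← Finset.sum_add_distrib]
          exact Finset.sum_congr rfl fun i _ => habs i
      _ ≤ 1 / d j + 1 / d j := by
          apply add_le_add
          · rw [Finset.sum_ite_eq' Finset.univ j]
            simp
          · by_cases hj : (j : ℕ) = 0
            · rw [Finset.sum_eq_zero (fun i _ => if_neg (by omega))]
              exact (one_div_pos.mpr (hd j)).le
            · set i0 : Fin N := ⟨(j : ℕ) - 1, by omega⟩ with hi0
              rw [Finset.sum_eq_single_of_mem i0 (Finset.mem_univ _)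
                (fun i _ hi => if_neg (fun h => hi (Fin.val_injective (show (i : ℕ) = (i0 : ℕ) by simp only [hi0]; omega))))]
              rw [if_pos (by simp only [hi0]; omega)]
      _ = 2 / d j := by ring
      _ ≤ 2 / g := by
          apply div_le_div_of_nonneg_left (by norm_num) hgpos (hgd j)
end
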